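/- The Leibniz algebra W̃₃ on ℂ⁵ with bracket [e₃,e₄] = e₂, [e₄,e₃] = −e₂, [e₃,e₅] = e₁, [e₅,e₃] = −e₁, [e₄,e₅] = e₃, [e₅,e₄] = −e₃, [e₅,e₅] = e₂ is isomorphic to the Leibniz algebra W̃₃' on ℂ⁵ with bracket [e₃,e₄] = e₂, [e₄,e₃] = −e₂, [e₃,e₅] = e₁, [e₅,e₃] = −e₁, [e₄,e₅] = e₃, [e₅,e₄] = −e₃, [e₄,e₄] = e₁. -/
import Mathlib


/-- The bracket of `W̃₃` on `ℂ⁵`: `[e₃,e₄] = e₂`, `[e₄,e₃] = -e₂`,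
`[e₃,e₅] = e₁`, `[e₅,e₃] = -e₁`, `[e₄,e₅] = e₃`, `[e₅,e₄] = -e₃`,
`[e₅,e₅] = e₂`, in coordinates. -/
def W3tildeBracket (x y : Fin 5 → ℂ) : Fin 5 → ℂ :=
  ![x 2 * y 4 - x 4 * y 2,
    x 2 * y 3 - x 3 * y 2 + x 4 * y 4,
    x 3 * y 4 - x 4 * y 3,
    0,
    0]

/-- The bracket of `W̃₃'` on `ℂ⁵`: `[e₃,e₄] = e₂`, `[e₄,e₃] = -e₂`,
`[e₃,e₅] = e₁`, `[e₅,e₃] = -e₁`, `[e₄,e₅] = e₃`, `[e₅,e₄] = -e₃`,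
`[e₄,e₄] = e₁`, in coordinates. -/
def W3tildePrimeBracket (x y : Fin 5 → ℂ) : Fin 5 → ℂ :=
  ![x 2 * y 4 - x 4 * y 2 + x 3 * y 3,
    x 2 * y 3 - x 3 * y 2,
    x 3 * y 4 - x 4 * y 3,
    0,
    0]

/-- The Leibniz algebra `W̃₃` is isomorphic to the Leibniz algebra `W̃₃'`. -/
theorem W3tilde_iso_W3tildePrime :
    ∃ T : (Fin 5 → ℂ) ≃ₗ[ℂ] (Fin 5 → ℂ),
      ∀ x y : Fin 5 → ℂ, T (W3tildeBracket x y) = W3tildePrimeBracket (T x) (T y) := by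
  refine ⟨⟨⟨⟨fun x => ![x 1, x 0, -x 2, -x 4, -x 3], ?_⟩, ?_⟩,
      fun x => ![x 1, x 0, -x 2, -x 4, -x 3], ?_, ?_⟩, ?_⟩
  · intro x y; funext i; fin_cases i <;> simp <;> ring
  · intro c x; funext i; fin_cases i <;> simp [mul_comm] <;> ring
  · intro x; funext i; fin_cases i <;> simp <;> ring
  · intro x; funext i; fin_cases i <;> simp <;> ring
  · intro x y
    funext i
    fin_cases i <;>
      simp [W3tildeBracket, W3tildePrimeBracket] <;> ring
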